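/- arXiv:2007.03057 — 5 statements merged into one kernel-verified Lean document; each statement's English description precedes it below -/
import Mathlib

section
/- Let w be a pseudometric on points s_i,t_i,s_j,t_j. With μ_{ij} defined as the latency quantity μ_{ij} = min{2w(s_i,s_j)+2w(s_j,t_i)+w(t_i,t_j), 2w(s_i,s_j)+2w(s_j,t_j)+w(t_j,t_i), 2w(s_i,t_i)+w(t_i,s_j)+w(s_j,t_j)}, it holds that (μ_{ij}+μ_{ji})/2 + w(s_i,s_j) ≤ 2·min{μ_{ij}, μ_{ji}}. -/
/-! Three times any ordering starting at `s_i` dominates `μ_ji + 2 w(s_i, s_j)`: by the triangle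
inequality it can be compared with a suitable ordering starting at `s_j`. Hence
`μ_ji + 2 w(s_i, s_j) ≤ 3 μ_ij` and symmetrically, so if `μ_ij` is the smaller one,
`(μ_ij + μ_ji) / 2 + w(s_i, s_j) ≤ (μ_ij + 3 μ_ij) / 2 = 2 μ_ij`. -/

noncomputable def mu {α : Type*} [PseudoMetricSpace α] (si ti sj tj : α) : ℝ :=
  min (min (2 * dist si sj + 2 * dist sj ti + dist ti tj)
      (2 * dist si sj + 2 * dist sj tj + dist tj ti))
    (2 * dist si ti + dist ti sj + dist sj tj)

section

variable {α : Type*} [PseudoMetricSpace α] (si ti sj tj : α)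

lemma mu_le_first : mu si ti sj tj ≤ 2 * dist si sj + 2 * dist sj ti + dist ti tj :=
  (min_le_left _ _).trans (min_le_left _ _)

lemma mu_le_second : mu si ti sj tj ≤ 2 * dist si sj + 2 * dist sj tj + dist tj ti :=
  (min_le_left _ _).trans (min_le_right _ _)

lemma mu_le_third : mu si ti sj tj ≤ 2 * dist si ti + dist ti sj + dist sj tj :=
  min_le_right _ _

lemma mu_swap_add_two_dist_le : mu sj tj si ti + 2 * dist si sj ≤ 3 * mu si ti sj tj := by
  have h₁ := mu_le_first sj tj si ti
  have h₂ := mu_le_second sj tj si ti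
  have h₃ := mu_le_third sj tj si ti
  rw [mu.eq_1 si, mul_min_of_nonneg _ _ zero_le_three, mul_min_of_nonneg _ _ zero_le_three]
  simp only [dist_comm sj si, dist_comm tj ti, dist_comm ti sj, dist_comm tj si]
    at h₁ h₂ h₃ ⊢
  refine le_min (le_min ?_ ?_) ?_
  · linarith [dist_triangle si sj ti, dist_nonneg (x := sj) (y := ti),
      dist_nonneg (x := ti) (y := tj)]
  · linarith [dist_triangle si sj tj, dist_nonneg (x := sj) (y := tj),
      dist_nonneg (x := ti) (y := tj)]
  · linarith [dist_triangle si sj tj, dist_triangle_right si sj ti,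
      dist_nonneg (x := si) (y := ti)]

end

theorem mu_avg_add_dist_le_two_min_mu {α : Type*} [PseudoMetricSpace α]
    (si ti sj tj : α) :
    (mu si ti sj tj + mu sj tj si ti) / 2 + dist si sj
      ≤ 2 * min (mu si ti sj tj) (mu sj tj si ti) := by
  have hij := mu_swap_add_two_dist_le si ti sj tj
  have hji := mu_swap_add_two_dist_le sj tj si ti
  rw [dist_comm sj si] at hji
  rw [mul_min_of_nonneg _ _ zero_le_two]
  exact le_min (by linarith) (by linarith)
end

section
/- Let w be a pseudometric on points s_i,t_i,s_j,t_j, with u_{ij} = min{w(s_i,s_j)+w(s_j,t_i)+w(t_i,t_j), w(s_i,s_j)+w(s_j,t_j)+w(t_j,t_i), w(s_i,t_i)+w(t_i,s_j)+w(s_j,t_j)} and μ_{ij} = min{2w(s_i,s_j)+2w(s_j,t_i)+w(t_i,t_j), 2w(s_i,s_j)+2w(s_j,t_j)+w(t_j,t_i), 2w(s_i,t_i)+w(t_i,s_j)+w(s_j,t_j)}. Then u_{ij} + u_{ji} + 2·w(s_i,s_j) ≤ 4·min{μ_{ij}, μ_{ji}}. -/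
/-! Bound each of the three routes defining `mu si ti sj tj` separately. For the route
`r`, `u si ti sj tj ≤ r` with the matching route of `u`, and the reverse tour
`u sj tj si ti` is bounded by a route of the swapped instance whose one new leg
(`si` to `tj`) is shortcut through `r` by the triangle inequality. The symmetric bound
by `mu sj tj si ti` follows by swapping the two requests. -/

noncomputable def u {α : Type*} [PseudoMetricSpace α] (si ti sj tj : α) : ℝ :=
  min (min (dist si sj + dist sj ti + dist ti tj) (dist si sj + dist sj tj + dist tj ti))
    (dist si ti + dist ti sj + dist sj tj)

section

variable {α : Type*} [PseudoMetricSpace α] (si ti sj tj : α)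

theorem u_le_sj_ti_tj : u si ti sj tj ≤ dist si sj + dist sj ti + dist ti tj :=
  (min_le_left _ _).trans (min_le_left _ _)

theorem u_le_sj_tj_ti : u si ti sj tj ≤ dist si sj + dist sj tj + dist tj ti :=
  (min_le_left _ _).trans (min_le_right _ _)

theorem u_le_ti_sj_tj : u si ti sj tj ≤ dist si ti + dist ti sj + dist sj tj :=
  min_le_right _ _

theorem u_add_u_add_two_dist_le_four_mu :
    u si ti sj tj + u sj tj si ti + 2 * dist si sj ≤ 4 * mu si ti sj tj := by
  have route_sj_ti_tj : u si ti sj tj + u sj tj si ti + 2 * dist si sj ≤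
      4 * (2 * dist si sj + 2 * dist sj ti + dist ti tj) := by
    linarith [u_le_sj_ti_tj si ti sj tj, u_le_sj_ti_tj sj tj si ti,
      dist_triangle4 si sj ti tj, dist_comm sj si, dist_comm tj ti,
      dist_nonneg (x := si) (y := sj), dist_nonneg (x := sj) (y := ti),
      dist_nonneg (x := ti) (y := tj)]
  have route_sj_tj_ti : u si ti sj tj + u sj tj si ti + 2 * dist si sj ≤
      4 * (2 * dist si sj + 2 * dist sj tj + dist tj ti) := by
    linarith [u_le_sj_tj_ti si ti sj tj, u_le_sj_ti_tj sj tj si ti,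
      dist_triangle si sj tj, dist_comm sj si,
      dist_nonneg (x := si) (y := sj), dist_nonneg (x := sj) (y := tj),
      dist_nonneg (x := tj) (y := ti)]
  have route_ti_sj_tj : u si ti sj tj + u sj tj si ti + 2 * dist si sj ≤
      4 * (2 * dist si ti + dist ti sj + dist sj tj) := by
    linarith [u_le_ti_sj_tj si ti sj tj, u_le_ti_sj_tj sj tj si ti,
      dist_triangle4 si ti sj tj, dist_triangle si ti sj, dist_comm tj si,
      dist_nonneg (x := si) (y := ti), dist_nonneg (x := ti) (y := sj),
      dist_nonneg (x := sj) (y := tj)]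
  rw [mu, mul_min_of_nonneg _ _ zero_le_four, mul_min_of_nonneg _ _ zero_le_four]
  exact le_min (le_min route_sj_ti_tj route_sj_tj_ti) route_ti_sj_tj

end

theorem u_add_u_add_two_dist_le_four_min_mu {α : Type*} [PseudoMetricSpace α]
    (si ti sj tj : α) :
    u si ti sj tj + u sj tj si ti + 2 * dist si sj
      ≤ 4 * min (mu si ti sj tj) (mu sj tj si ti) := by
  rw [mul_min_of_nonneg _ _ zero_le_four]
  refine le_min (u_add_u_add_two_dist_le_four_mu si ti sj tj) ?_
  simpa only [add_comm (u si ti sj tj), dist_comm si sj]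
    using u_add_u_add_two_dist_le_four_mu sj tj si ti
end

section
/- Let w be a pseudometric and d,s_i,t_i,s_j,t_j points, with μ_{ij} = min{2w(s_i,s_j)+2w(s_j,t_i)+w(t_i,t_j), 2w(s_i,s_j)+2w(s_j,t_j)+w(t_j,t_i), 2w(s_i,t_i)+w(t_i,s_j)+w(s_j,t_j)}. Then 2w(d,s_i)+2w(d,s_j)+μ_{ij}+μ_{ji} + min{2(w(d,s_i)+w(s_i,t_i)) + w(t_i,d)+w(d,s_j)+w(s_j,t_j), 2(w(d,s_j)+w(s_j,t_j)) + w(t_j,d)+w(d,s_i)+w(s_i,t_i)} ≤ min{8w(d,s_i)+5μ_{ij}, 8w(d,s_j)+5μ_{ji}}. -/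
section

variable {α : Type*} [PseudoMetricSpace α]

theorem mu_le_route_three (si ti sj tj : α) :
    mu si ti sj tj ≤ 2 * dist si ti + dist ti sj + dist sj tj :=
  min_le_right _ _

theorem le_four_mul_mu (si ti sj tj : α) :
    3 * dist si sj + 4 * dist si ti + 3 * dist sj tj + dist tj si ≤ 4 * mu si ti sj tj := by
  have h_si_sj := dist_comm si sj
  have h_sj_tj := dist_comm sj tj
  simp only [mu, mul_min_of_nonneg _ _ (by norm_num : (0 : ℝ) ≤ 4), le_min_iff]
  refine ⟨⟨?_, ?_⟩, ?_⟩
  · linarith [dist_triangle si sj ti, dist_triangle sj ti tj, dist_triangle tj sj si,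
      dist_triangle tj ti sj]
  · linarith [dist_triangle si tj ti, dist_triangle si sj tj, dist_triangle tj sj si]
  · linarith [dist_triangle si ti sj, dist_triangle tj sj si, dist_triangle sj ti si]

theorem two_mul_dist_add_mu_add_min_le (d si ti sj tj : α) :
    2 * dist d sj + mu sj tj si ti +
        min (2 * (dist d si + dist si ti) + (dist ti d + dist d sj + dist sj tj))
          (2 * (dist d sj + dist sj tj) + (dist tj d + dist d si + dist si ti))
      ≤ 6 * dist d si + 4 * mu si ti sj tj := by
  have hmin := min_le_left
    (2 * (dist d si + dist si ti) + (dist ti d + dist d sj + dist sj tj))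
    (2 * (dist d sj + dist sj tj) + (dist tj d + dist d si + dist si ti))
  linarith [mu_le_route_three sj tj si ti, le_four_mul_mu si ti sj tj, dist_triangle d si sj,
    dist_triangle ti si d, dist_comm si d, dist_comm ti si]

end

theorem combined_latency_bound {α : Type*} [PseudoMetricSpace α]
    (d si ti sj tj : α) :
    2 * dist d si + 2 * dist d sj + mu si ti sj tj + mu sj tj si ti +
      min (2 * (dist d si + dist si ti) + (dist ti d + dist d sj + dist sj tj))
        (2 * (dist d sj + dist sj tj) + (dist tj d + dist d si + dist si ti))
      ≤ min (8 * dist d si + 5 * mu si ti sj tj)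
          (8 * dist d sj + 5 * mu sj tj si ti) := by
  have hi := two_mul_dist_add_mu_add_min_le d si ti sj tj
  have hj := two_mul_dist_add_mu_add_min_le d sj tj si ti
  rw [min_comm] at hj
  exact le_min (by linarith) (by linarith)
end

section
/- Let w be a pseudometric and d,s_i,t_i,s_j,t_j points, with μ_{ij} = min{2w(s_i,s_j)+2w(s_j,t_i)+w(t_i,t_j), 2w(s_i,s_j)+2w(s_j,t_j)+w(t_j,t_i), 2w(s_i,t_i)+w(t_i,s_j)+w(s_j,t_j)}. Then (2w(d,s_i)+μ_{ij}+2w(d,s_j)+μ_{ji})/2 ≤ 2·min{2w(d,s_i)+μ_{ij}, 2w(d,s_j)+μ_{ji}}. -/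
lemma add_div_two_le_two_mul_min {a b : ℝ} (hab : a ≤ 3 * b) (hba : b ≤ 3 * a) :
    (a + b) / 2 ≤ 2 * min a b := by
  rcases min_choice a b with h | h <;> rw [h] <;> linarith

section PseudoMetricSpace

variable {α : Type*} [PseudoMetricSpace α]

lemma mu_add_two_mul_dist_le_three_mul_mu (si ti sj tj : α) :
    mu si ti sj tj + 2 * dist si sj ≤ 3 * mu sj tj si ti := by
  have hX : mu si ti sj tj ≤ 2 * dist si sj + 2 * dist sj ti + dist ti tj :=
    (min_le_left _ _).trans (min_le_left _ _)
  have hY : mu si ti sj tj ≤ 2 * dist si sj + 2 * dist sj tj + dist tj ti :=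
    (min_le_left _ _).trans (min_le_right _ _)
  have hZ : mu si ti sj tj ≤ 2 * dist si ti + dist ti sj + dist sj tj := min_le_right _ _
  have := dist_triangle sj si ti
  have := dist_triangle sj si tj
  have := dist_triangle si tj sj
  rw [mu.eq_1 sj tj si ti, mul_min_of_nonneg _ _ zero_le_three,
    mul_min_of_nonneg _ _ zero_le_three]
  refine le_min (le_min ?_ ?_) ?_ <;>
    linarith [dist_comm si sj, dist_comm si tj, dist_comm sj ti, dist_comm ti tj,
      dist_comm sj tj, dist_nonneg (x := si) (y := ti), dist_nonneg (x := si) (y := tj),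
      dist_nonneg (x := sj) (y := tj), dist_nonneg (x := ti) (y := tj)]

lemma two_mul_dist_add_mu_le_three_mul (d si ti sj tj : α) :
    2 * dist d si + mu si ti sj tj ≤ 3 * (2 * dist d sj + mu sj tj si ti) := by
  have := mu_add_two_mul_dist_le_three_mul_mu si ti sj tj
  linarith [dist_triangle d sj si, dist_comm sj si, dist_nonneg (x := d) (y := sj)]

end PseudoMetricSpace

theorem ma_two_approx_lat {α : Type*} [PseudoMetricSpace α]
    (d si ti sj tj : α) :
    (2 * dist d si + mu si ti sj tj + (2 * dist d sj + mu sj tj si ti)) / 2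
      ≤ 2 * min (2 * dist d si + mu si ti sj tj)
          (2 * dist d sj + mu sj tj si ti) :=
  add_div_two_le_two_mul_min (two_mul_dist_add_mu_le_three_mul d si ti sj tj)
    (two_mul_dist_add_mu_le_three_mul d sj tj si ti)
end

section
/- Let w be a pseudometric and d,s_i,t_i,s_j,t_j points, with u_{ij}, u_{ji}, μ_{ij}, μ_{ji} defined as in the car-sharing problem. Then u_{ij} + u_{ji} + 2·min{w(d,s_i), w(d,s_j)} + w(s_i,s_j) ≤ 3·min{2w(d,s_i)+μ_{ij}, 2w(d,s_j)+μ_{ji}}. -/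
lemma u_add_u_add_dist_le_three_mul_mu {α : Type*} [PseudoMetricSpace α] (si ti sj tj : α) :
    u si ti sj tj + u sj tj si ti + dist si sj ≤ 3 * mu si ti sj tj := by
  simp only [mu, mul_min_of_nonneg (a := (3 : ℝ)) _ _ zero_le_three]
  refine le_min (le_min ?_ ?_) ?_
  · have hij : u si ti sj tj ≤ dist si sj + dist sj ti + dist ti tj :=
      (min_le_left _ _).trans (min_le_left _ _)
    have hji : u sj tj si ti ≤ dist sj si + dist si ti + dist ti tj :=
      (min_le_left _ _).trans (min_le_right _ _)
    linarith [dist_triangle si sj ti, dist_comm si sj, dist_nonneg (x := si) (y := sj),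
      dist_nonneg (x := sj) (y := ti), dist_nonneg (x := ti) (y := tj)]
  · have hij : u si ti sj tj ≤ dist si sj + dist sj tj + dist tj ti :=
      (min_le_left _ _).trans (min_le_right _ _)
    have hji : u sj tj si ti ≤ dist sj si + dist si tj + dist tj ti :=
      (min_le_left _ _).trans (min_le_left _ _)
    linarith [dist_triangle si sj tj, dist_comm si sj, dist_nonneg (x := si) (y := sj),
      dist_nonneg (x := sj) (y := tj), dist_nonneg (x := tj) (y := ti)]
  · have hij : u si ti sj tj ≤ dist si ti + dist ti sj + dist sj tj := min_le_right _ _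
    have hji : u sj tj si ti ≤ dist sj tj + dist tj si + dist si ti := min_le_right _ _
    linarith [dist_triangle si sj tj, dist_triangle si ti sj, dist_comm si tj, dist_comm ti sj,
      dist_nonneg (x := si) (y := ti)]

theorem ma_one_three_approx_lat {α : Type*} [PseudoMetricSpace α]
    (d si ti sj tj : α) :
    u si ti sj tj + u sj tj si ti + 2 * min (dist d si) (dist d sj) + dist si sj
      ≤ 3 * min (2 * dist d si + mu si ti sj tj)
          (2 * dist d sj + mu sj tj si ti) := by
  rw [mul_min_of_nonneg (a := (3 : ℝ)) _ _ zero_le_three]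
  refine le_min ?_ ?_
  · linarith [u_add_u_add_dist_le_three_mul_mu si ti sj tj, min_le_left (dist d si) (dist d sj),
      dist_nonneg (x := d) (y := si)]
  · linarith [u_add_u_add_dist_le_three_mul_mu sj tj si ti, min_le_right (dist d si) (dist d sj),
      dist_nonneg (x := d) (y := sj), dist_comm si sj]
end
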